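/- arXiv:1701.08424 — 3 statements merged into one kernel-verified Lean document; each statement's English description precedes it below -/
import Mathlib

section
/- Let E : ℂ → ℂ be defined by E(z) = φ(N,z) + i·φ'(N,z), where φ solves -φ''+qφ=zφ with φ(0,z)=0, φ'(0,z)=1, q real continuous on [0,N]. Then for every z with Im z ≠ 0, (|E(z)|² - |E(conj z)|²)/(4·Im z) = ∫₀ᴺ |φ(x,z)|² dx. In particular, for Im z > 0 one has |E(z)| > |E(conj z)|, i.e., E is a Hermite–Biehler function. -/
/-!
Because `q` is real, `x ↦ conj φ(x,z)` solves the initial value problem with spectral parameter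
`conj z`, so by uniqueness `E(conj z) = conj φ(N,z) + i conj φ'(N,z)` and
`|E(z)|² - |E(conj z)|² = 4 Im(φ(N,z) conj φ'(N,z))`. Differentiating `Im(φ conj φ')` gives
`Im z |φ|²` (the Lagrange identity), so this equals `4 Im z ∫₀ᴺ |φ(x,z)|² dx`; the integral is
positive since `φ'(0,z) = 1` keeps `φ(·,z)` from vanishing identically.
-/

open Complex ComplexConjugate Set

theorem eqOn_of_hasDerivAt_of_hasDerivAt_mul {a b C : ℝ} {c f f' g g' : ℝ → ℂ}
    (hc : ∀ x ∈ Icc a b, ‖c x‖ ≤ C)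
    (hf : ∀ x ∈ Icc a b, HasDerivAt f (f' x) x) (hf' : ∀ x ∈ Icc a b, HasDerivAt f' (c x * f x) x)
    (hg : ∀ x ∈ Icc a b, HasDerivAt g (g' x) x) (hg' : ∀ x ∈ Icc a b, HasDerivAt g' (c x * g x) x)
    (h0 : f a = g a) (h1 : f' a = g' a) :
    EqOn f g (Icc a b) ∧ EqOn f' g' (Icc a b) := by
  have hv : ∀ t ∈ Ico a b,
      LipschitzOnWith (max 1 C.toNNReal) (fun u : ℂ × ℂ => (u.2, c t * u.1)) univ := by
    intro t ht
    refine ((LipschitzWith.prod_snd.prodMk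
      ((lipschitzWith_smul (c t)).comp LipschitzWith.prod_fst)).weaken ?_).lipschitzOnWith
    refine max_le_max le_rfl ?_
    rw [mul_one, ← NNReal.coe_le_coe, coe_nnnorm, Real.coe_toNNReal']
    exact (hc t (Ico_subset_Icc_self ht)).trans (le_max_left _ _)
  have hsol : ∀ {f f' : ℝ → ℂ}, (∀ x ∈ Icc a b, HasDerivAt f (f' x) x) →
      (∀ x ∈ Icc a b, HasDerivAt f' (c x * f x) x) →
      ContinuousOn (fun x => (f x, f' x)) (Icc a b) ∧
      ∀ t ∈ Ico a b, HasDerivWithinAt (fun x => (f x, f' x)) (f' t, c t * f t) (Ici t) t :=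
    fun hf hf' => ⟨HasDerivAt.continuousOn fun x hx => (hf x hx).prodMk (hf' x hx),
      fun t ht => ((hf t (Ico_subset_Icc_self ht)).prodMk
        (hf' t (Ico_subset_Icc_self ht))).hasDerivWithinAt⟩
  have heq := ODE_solution_unique_of_mem_Icc_right hv (hsol hf hf').1 (hsol hf hf').2
    (fun _ _ => mem_univ _) (hsol hg hg').1 (hsol hg hg').2 (fun _ _ => mem_univ _)
    (Prod.ext h0 h1)
  exact ⟨fun x hx => congrArg Prod.fst (heq hx), fun x hx => congrArg Prod.snd (heq hx)⟩

theorem norm_add_I_mul_sq_sub (u v : ℂ) :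
    ‖u + I * v‖ ^ 2 - ‖conj u + I * conj v‖ ^ 2 = 4 * (u * conj v).im := by
  simp only [Complex.sq_norm, normSq_apply, add_re, add_im, mul_re, mul_im, I_re, I_im, conj_re,
    conj_im]
  ring

theorem integral_norm_sq_pos {E : Type*} [NormedAddCommGroup E] [NormedSpace ℝ E]
    {a b : ℝ} (hab : a < b) {f : ℝ → E} {f'a : E}
    (hf : ContinuousOn f (Icc a b)) (hfa : HasDerivWithinAt f f'a (Icc a b) a) (hf'a : f'a ≠ 0) :
    0 < ∫ x in a..b, ‖f x‖ ^ 2 := by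
  have ⟨x, hx, hfx⟩ : ∃ x ∈ Icc a b, f x ≠ 0 := by
    by_contra! hzero
    have hfa0 : HasDerivWithinAt f 0 (Icc a b) a :=
      (hasDerivWithinAt_const a _ 0).congr hzero (hzero a (left_mem_Icc.2 hab.le))
    exact hf'a ((uniqueDiffOn_Icc hab a (left_mem_Icc.2 hab.le)).eq_deriv _ hfa hfa0)
  exact intervalIntegral.integral_pos hab (hf.norm.pow 2) (fun _ _ => by positivity)
    ⟨x, hx, by positivity⟩

def IsSchrodingerSolution (q : ℝ → ℝ) (z : ℂ) (a b : ℝ) (f f' : ℝ → ℂ) : Prop :=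
  ∀ x ∈ Icc a b, HasDerivAt f (f' x) x ∧ HasDerivAt f' ((q x : ℂ) * f x - z * f x) x

namespace IsSchrodingerSolution

variable {q : ℝ → ℝ} {z : ℂ} {a b : ℝ} {f f' : ℝ → ℂ}

theorem star (h : IsSchrodingerSolution q z a b f f') :
    IsSchrodingerSolution q (conj z) a b (fun x => conj (f x)) (fun x => conj (f' x)) := by
  intro x hx
  refine ⟨(h x hx).1.star, (h x hx).2.star.congr_deriv ?_⟩
  simp only [star_def, map_sub, map_mul, conj_ofReal]

theorem im_mul_conj_sub (hab : a ≤ b) (h : IsSchrodingerSolution q z a b f f') :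
    (f b * conj (f' b)).im - (f a * conj (f' a)).im = z.im * ∫ x in a..b, ‖f x‖ ^ 2 := by
  have hW : ∀ x ∈ uIcc a b,
      HasDerivAt (fun y => (f y * conj (f' y)).im) (z.im * ‖f x‖ ^ 2) x := by
    intro x hx
    rw [uIcc_of_le hab] at hx
    have H := imCLM.hasFDerivAt.comp_hasDerivAt x ((h x hx).1.mul (h x hx).2.star)
    refine H.congr_deriv ?_
    simp only [imCLM_apply, star_def, map_sub, map_mul, conj_ofReal, sub_im, add_im, sub_re,
      mul_im, mul_re, conj_re, conj_im, ofReal_re, ofReal_im, Complex.sq_norm, normSq_apply]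
    ring
  have hcont : ContinuousOn f (uIcc a b) :=
    HasDerivAt.continuousOn fun x hx => (h x (uIcc_of_le hab ▸ hx)).1
  rw [← intervalIntegral.integral_const_mul, intervalIntegral.integral_eq_sub_of_hasDerivAt hW
    ((continuousOn_const.mul (hcont.norm.pow 2)).intervalIntegrable)]

theorem eqOn (hq : ContinuousOn q (Icc a b)) {g g' : ℝ → ℂ}
    (hf : IsSchrodingerSolution q z a b f f') (hg : IsSchrodingerSolution q z a b g g')
    (h0 : f a = g a) (h1 : f' a = g' a) :
    EqOn f g (Icc a b) ∧ EqOn f' g' (Icc a b) := by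
  obtain ⟨C, hC⟩ := isCompact_Icc.exists_bound_of_continuousOn hq
  have hc : ∀ x ∈ Icc a b, ‖(q x : ℂ) - z‖ ≤ C + ‖z‖ := fun x hx =>
    (norm_sub_le _ _).trans (add_le_add_left (by simpa using hC x hx) _)
  refine eqOn_of_hasDerivAt_of_hasDerivAt_mul hc (fun x hx => (hf x hx).1)
    (fun x hx => ?_) (fun x hx => (hg x hx).1) (fun x hx => ?_) h0 h1
  · exact (hf x hx).2.congr_deriv (sub_mul _ _ _).symm
  · exact (hg x hx).2.congr_deriv (sub_mul _ _ _).symm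

end IsSchrodingerSolution

/-- `E(z) = φ(N,z) + i φ'(N,z)` is a Hermite–Biehler function. -/
theorem schrodinger_hermite_biehler
    (N : ℝ) (hN : 0 < N) (q : ℝ → ℝ) (hq : ContinuousOn q (Set.Icc 0 N))
    (φ φ' : ℝ → ℂ → ℂ)
    (hderiv : ∀ z : ℂ, ∀ x ∈ Set.Icc (0:ℝ) N, HasDerivAt (fun y => φ y z) (φ' x z) x)
    (hderiv' : ∀ z : ℂ, ∀ x ∈ Set.Icc (0:ℝ) N,
      HasDerivAt (fun y => φ' y z) ((q x : ℂ) * φ x z - z * φ x z) x)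
    (h0 : ∀ z : ℂ, φ 0 z = 0) (h1 : ∀ z : ℂ, φ' 0 z = 1)
    (E : ℂ → ℂ) (hE : ∀ z : ℂ, E z = φ N z + I * φ' N z) :
    ∀ z : ℂ, z.im ≠ 0 →
      ((‖E z‖ ^ 2 - ‖E (conj z)‖ ^ 2) / (4 * z.im) = ∫ x in (0:ℝ)..N, ‖φ x z‖ ^ 2) ∧
      (0 < z.im → ‖E (conj z)‖ < ‖E z‖) := by
  intro z hz
  have hsol : ∀ w, IsSchrodingerSolution q w 0 N (φ · w) (φ' · w) :=
    fun w x hx => ⟨hderiv w x hx, hderiv' w x hx⟩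
  have hNmem : N ∈ Icc 0 N := right_mem_Icc.2 hN.le
  obtain ⟨hφ, hφ'⟩ := (hsol (conj z)).eqOn hq (hsol z).star (by simp [h0]) (by simp [h1])
  have hW := (hsol z).im_mul_conj_sub hN.le
  simp only [h0, zero_mul, zero_im, sub_zero] at hW
  have key : ‖E z‖ ^ 2 - ‖E (conj z)‖ ^ 2 = 4 * z.im * ∫ x in (0:ℝ)..N, ‖φ x z‖ ^ 2 := by
    rw [hE, hE, show φ N (conj z) = conj (φ N z) from hφ hNmem,
      show φ' N (conj z) = conj (φ' N z) from hφ' hNmem, norm_add_I_mul_sq_sub, hW, mul_assoc]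
  have hpos : 0 < ∫ x in (0:ℝ)..N, ‖φ x z‖ ^ 2 :=
    integral_norm_sq_pos hN (HasDerivAt.continuousOn (hderiv z))
      (hderiv z 0 (left_mem_Icc.2 hN.le)).hasDerivWithinAt (by simp [h1])
  refine ⟨by rw [key]; field_simp, fun him => ?_⟩
  exact lt_of_pow_lt_pow_left₀ 2 (norm_nonneg _) (by nlinarith)
end

section
/- Let θ(·,z) solve the Dirac system Jθ' + Vθ = zθ on [0,N] with θ(0,z) = (0,1), V real symmetric trace-free and continuous, and define E(z) := θ₁(N,z) - i·θ₂(N,z). Then for every z with Im z ≠ 0, (|E(z)|² - |E(conj z)|²)/(4·Im z) = ∫₀ᴺ (|θ₁(x,z)|² + |θ₂(x,z)|²) dx > 0. In particular E is a Hermite–Biehler function. -/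
open Complex ComplexConjugate Set

/-!
The Lagrange identity for the Dirac system says that `Im (conj θ₁ θ₂)` has derivative
`Im z (|θ₁|² + |θ₂|²)`; integrating from `0`, where `θ = (0, 1)`, gives
`Im (conj θ₁ θ₂)(N) = Im z ∫₀ᴺ |θ|²`. Since `p, q` are real, `conj θ(·, z)` solves the system at
`conj z` with the same initial value, so by uniqueness for linear ODEs (Grönwall)
`θ(N, conj z) = conj θ(N, z)`, and then `|E z|² - |E (conj z)|² = 4 Im (conj θ₁ θ₂)(N)`.
The integral is positive because the integrand is continuous and equals `1` at `0`.
-/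

theorem eqOn_Icc_of_linear_ODE {𝕜 E : Type*} [NontriviallyNormedField 𝕜] [NormedAddCommGroup E]
    [NormedSpace ℝ E] [NormedSpace 𝕜 E] {A : ℝ → E →L[𝕜] E} {a b : ℝ}
    (hA : ContinuousOn A (Icc a b)) {f g : ℝ → E}
    (hf : ∀ t ∈ Icc a b, HasDerivAt f (A t (f t)) t)
    (hg : ∀ t ∈ Icc a b, HasDerivAt g (A t (g t)) t) (ha : f a = g a) :
    EqOn f g (Icc a b) := by
  obtain ⟨K, hK⟩ := isCompact_Icc.exists_bound_of_continuousOn hA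
  have hfg : ∀ t ∈ Icc a b, HasDerivAt (f - g) (A t ((f - g) t)) t := fun t ht => by
    simpa only [Pi.sub_apply, map_sub] using (hf t ht).sub (hg t ht)
  intro t ht
  refine sub_eq_zero.1 <| eq_zero_of_abs_deriv_le_mul_abs_self_of_eq_zero_right
    (fun t ht => (hfg t ht).continuousAt.continuousWithinAt)
    (fun t ht => (hfg t (Ico_subset_Icc_self ht)).hasDerivWithinAt) (sub_eq_zero.2 ha)
    (fun t ht => (A t).le_of_opNorm_le (hK t (Ico_subset_Icc_self ht)) _) t ht

lemma integral_norm_sq_add_norm_sq_pos {θ : ℝ → ℂ × ℂ} {a b : ℝ} (hab : a < b)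
    (hθ : ContinuousOn θ (Icc a b)) (ha : θ a ≠ 0) :
    0 < ∫ x in a..b, (‖(θ x).1‖ ^ 2 + ‖(θ x).2‖ ^ 2) := by
  refine intervalIntegral.integral_pos hab (by fun_prop) (fun _ _ => by positivity)
    ⟨a, left_mem_Icc.2 hab.le, ?_⟩
  contrapose! ha
  have h1 : ‖(θ a).1‖ ^ 2 = 0 := by linarith [sq_nonneg ‖(θ a).1‖, sq_nonneg ‖(θ a).2‖]
  have h2 : ‖(θ a).2‖ ^ 2 = 0 := by linarith [sq_nonneg ‖(θ a).1‖, sq_nonneg ‖(θ a).2‖]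
  exact Prod.ext (by simpa using h1) (by simpa using h2)

lemma norm_sub_I_mul_sq_sub_norm_conj_sub_I_mul_sq (u v : ℂ) :
    ‖u - I * v‖ ^ 2 - ‖conj u - I * conj v‖ ^ 2 = 4 * (conj u * v).im := by
  simp only [Complex.sq_norm, normSq_apply, sub_re, sub_im, mul_re, mul_im, I_re, I_im, conj_re,
    conj_im]
  ring

namespace Dirac

/-- The matrix `-J (z - V)`, so that `Jθ' + Vθ = zθ` reads `θ' = field (p x) (q x) z θ`. -/
noncomputable def field (p q : ℝ) (z : ℂ) : ℂ × ℂ →L[ℂ] ℂ × ℂ :=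
  let fst := ContinuousLinearMap.fst ℂ ℂ ℂ
  let snd := ContinuousLinearMap.snd ℂ ℂ ℂ
  (q : ℂ) • fst.prod (-snd) - (p : ℂ) • snd.prod fst + z • (-snd).prod fst

@[simp]
lemma field_apply (p q : ℝ) (z : ℂ) (e : ℂ × ℂ) :
    field p q z e = (q * e.1 - p * e.2 - z * e.2, z * e.1 - p * e.1 - q * e.2) := by
  simp only [field, add_apply, sub_apply, smul_apply, neg_apply, ContinuousLinearMap.prod_apply,
    ContinuousLinearMap.coe_fst', ContinuousLinearMap.coe_snd', Prod.smul_mk, smul_eq_mul,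
    Prod.mk_add_mk, Prod.mk_sub_mk, Prod.mk.injEq]
  constructor <;> ring

lemma continuousOn_field {p q : ℝ → ℝ} {s : Set ℝ} (hp : ContinuousOn p s) (hq : ContinuousOn q s)
    (z : ℂ) : ContinuousOn (fun x => field (p x) (q x) z) s := by
  unfold field
  fun_prop

def IsSolution (p q : ℝ → ℝ) (z : ℂ) (a b : ℝ) (θ : ℝ → ℂ × ℂ) : Prop :=
  ∀ x ∈ Icc a b, HasDerivAt θ (field (p x) (q x) z (θ x)) x

variable {p q : ℝ → ℝ} {z : ℂ} {a b : ℝ} {θ : ℝ → ℂ × ℂ}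

lemma IsSolution.star (hθ : IsSolution p q z a b θ) :
    IsSolution p q (conj z) a b (fun x => star (θ x)) := by
  intro x hx
  refine (hθ x hx).star.congr_deriv ?_
  simp [Prod.star_def]

lemma IsSolution.continuousOn (hθ : IsSolution p q z a b θ) : ContinuousOn θ (Icc a b) :=
  fun x hx => (hθ x hx).continuousAt.continuousWithinAt

lemma IsSolution.eqOn (hp : ContinuousOn p (Icc a b)) (hq : ContinuousOn q (Icc a b))
    {φ : ℝ → ℂ × ℂ} (hθ : IsSolution p q z a b θ) (hφ : IsSolution p q z a b φ) (ha : θ a = φ a) :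
    EqOn θ φ (Icc a b) :=
  eqOn_Icc_of_linear_ODE (continuousOn_field hp hq z) hθ hφ ha

lemma IsSolution.hasDerivAt_im_conj_mul (hθ : IsSolution p q z a b θ) {x : ℝ} (hx : x ∈ Icc a b) :
    HasDerivAt (fun x => (conj (θ x).1 * (θ x).2).im)
      (z.im * (‖(θ x).1‖ ^ 2 + ‖(θ x).2‖ ^ 2)) x := by
  have h1 := (ContinuousLinearMap.fst ℝ ℂ ℂ).hasFDerivAt.comp_hasDerivAt x (hθ x hx)
  have h2 := (ContinuousLinearMap.snd ℝ ℂ ℂ).hasFDerivAt.comp_hasDerivAt x (hθ x hx)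
  refine (imCLM.hasFDerivAt.comp_hasDerivAt x (h1.star.mul h2)).congr_deriv ?_
  simp only [Function.comp_apply, ContinuousLinearMap.coe_fst', ContinuousLinearMap.coe_snd',
    field_apply, imCLM_apply, ← starRingEnd_apply, Complex.sq_norm, normSq_apply, map_sub, map_mul,
    conj_ofReal, add_im, sub_im, mul_im, mul_re, sub_re, conj_re, conj_im, ofReal_re, ofReal_im]
  ring

lemma IsSolution.im_mul_integral (hθ : IsSolution p q z a b θ) (hab : a ≤ b) :
    z.im * ∫ x in a..b, (‖(θ x).1‖ ^ 2 + ‖(θ x).2‖ ^ 2) =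
      (conj (θ b).1 * (θ b).2).im - (conj (θ a).1 * (θ a).2).im := by
  rw [← intervalIntegral.integral_const_mul]
  refine intervalIntegral.integral_eq_sub_of_hasDerivAt
    (fun x hx => hθ.hasDerivAt_im_conj_mul (uIcc_of_le hab ▸ hx)) ?_
  refine ContinuousOn.intervalIntegrable ?_
  rw [uIcc_of_le hab]
  have := hθ.continuousOn
  fun_prop

end Dirac

/-- `E(z) = θ₁(N,z) - i θ₂(N,z)` is a Hermite–Biehler function for the Dirac system. -/
theorem dirac_hermite_biehler
    (N : ℝ) (hN : 0 < N) (p q : ℝ → ℝ)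
    (hp : ContinuousOn p (Set.Icc 0 N)) (hq : ContinuousOn q (Set.Icc 0 N))
    (θ1 θ2 : ℝ → ℂ → ℂ)
    (hθ1 : ∀ z : ℂ, ∀ x ∈ Set.Icc (0:ℝ) N,
      HasDerivAt (fun y => θ1 y z) ((q x : ℂ) * θ1 x z - (p x : ℂ) * θ2 x z - z * θ2 x z) x)
    (hθ2 : ∀ z : ℂ, ∀ x ∈ Set.Icc (0:ℝ) N,
      HasDerivAt (fun y => θ2 y z) (z * θ1 x z - (p x : ℂ) * θ1 x z - (q x : ℂ) * θ2 x z) x)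
    (h0 : ∀ z : ℂ, θ1 0 z = 0 ∧ θ2 0 z = 1)
    (E : ℂ → ℂ) (hE : ∀ z : ℂ, E z = θ1 N z - I * θ2 N z) :
    ∀ z : ℂ, z.im ≠ 0 →
      ((‖E z‖ ^ 2 - ‖E (conj z)‖ ^ 2) / (4 * z.im) =
          ∫ x in (0:ℝ)..N, (‖θ1 x z‖ ^ 2 + ‖θ2 x z‖ ^ 2)) ∧
      (0 < ∫ x in (0:ℝ)..N, (‖θ1 x z‖ ^ 2 + ‖θ2 x z‖ ^ 2)) ∧
      (0 < z.im → ‖E (conj z)‖ < ‖E z‖) := by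
  intro z hz
  set Θ : ℂ → ℝ → ℂ × ℂ := fun w x => (θ1 x w, θ2 x w)
  have hsol (w : ℂ) : Dirac.IsSolution p q w 0 N (Θ w) := fun x hx =>
    ((hθ1 w x hx).prodMk (hθ2 w x hx)).congr_deriv (by simp [Θ])
  have hsymm : Θ (conj z) N = star (Θ z N) :=
    (hsol (conj z)).eqOn hp hq (hsol z).star (by simp [Θ, h0, Prod.star_def]) ⟨hN.le, le_rfl⟩
  have hdiff : ‖E z‖ ^ 2 - ‖E (conj z)‖ ^ 2 =
      4 * (z.im * ∫ x in (0:ℝ)..N, (‖θ1 x z‖ ^ 2 + ‖θ2 x z‖ ^ 2)) := by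
    rw [hE, hE, show θ1 N (conj z) = conj (θ1 N z) from congrArg Prod.fst hsymm,
      show θ2 N (conj z) = conj (θ2 N z) from congrArg Prod.snd hsymm,
      norm_sub_I_mul_sq_sub_norm_conj_sub_I_mul_sq, (hsol z).im_mul_integral hN.le]
    simp [Θ, h0]
  have hpos := integral_norm_sq_add_norm_sq_pos hN (hsol z).continuousOn (by simp [Θ, h0])
  refine ⟨by rw [hdiff]; field_simp, hpos, fun him => ?_⟩
  exact lt_of_pow_lt_pow_left₀ 2 (norm_nonneg _) (by linarith [mul_pos him hpos])
end

section
/- Let r = (r₀, r₁, …, r_{2T-2}) with r₀ = 1 be the response vector and define the T×T matrix C^T by C^T_{ij} = Σ_{k=0}^{T - max(i,j)} r_{|i-j| + 2k} (indices 1 ≤ i,j ≤ T). If r_{k-1} = ∫ T_k(λ) dρ(λ) for a positive finite measure ρ for which all T_k are integrable, then C^T_{l+1, m+1} = ∫ T_{T-l}(λ) T_{T-m}(λ) dρ(λ) for 0 ≤ l, m ≤ T-1. -/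
/-!
The polynomials `T k` are rescaled Chebyshev polynomials of the second kind, and they satisfy the
linearization formula `T p * T q = ∑_{k < min p q} T (|p - q| + 2k + 1)`, which follows from the
recurrence by induction on `min p q` via the identity
`T (a + 1) * T (a + 1 + d) = T a * T (a + 2 + d) + T (d + 1)`.
Integrating the formula for `p = Tm - l`, `q = Tm - m` against `ρ` turns each `T (j + 1)` into
the moment `r j`, which is the entry of the connecting operator.
-/

open MeasureTheory Finset

namespace ChebyshevLike

variable {R : Type*} [CommRing R] {u : ℕ → R} {x : R}

theorem mul_succ_add (h0 : u 0 = 0) (h1 : u 1 = 1)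
    (hrec : ∀ t, u (t + 2) = x * u (t + 1) - u t) (a d : ℕ) :
    u (a + 1) * u (a + 1 + d) = u a * u (a + 2 + d) + u (d + 1) := by
  induction a generalizing d with
  | zero => simp [h0, h1, Nat.add_comm]
  | succ n ih =>
    have e1 : u (n + 1 + 1) = x * u (n + 1) - u n := hrec n
    have e2 : u (n + 1 + 2 + d) = x * u (n + 1 + 1 + d) - u (n + 1 + d) := by
      rw [show n + 1 + 2 + d = n + 1 + d + 2 by omega,
        show n + 1 + 1 + d = n + 1 + d + 1 by omega]
      exact hrec _
    have ih' := ih d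
    rw [show n + 2 + d = n + 1 + 1 + d by omega] at ih'
    rw [e1, e2]
    linear_combination ih'

theorem mul_add_eq_sum_range (h0 : u 0 = 0) (h1 : u 1 = 1)
    (hrec : ∀ t, u (t + 2) = x * u (t + 1) - u t) (a d : ℕ) :
    u a * u (a + d) = ∑ k ∈ range a, u (d + 2 * k + 1) := by
  induction a generalizing d with
  | zero => simp [h0]
  | succ n ih =>
    have ih' := ih (d + 2)
    rw [show n + (d + 2) = n + 2 + d by omega] at ih'
    rw [mul_succ_add h0 h1 hrec, ih', sum_range_succ']
    simp only [mul_zero, add_zero, mul_add, mul_one, ← add_assoc, add_right_comm d 2]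

theorem mul_eq_sum_range_min (h0 : u 0 = 0) (h1 : u 1 = 1)
    (hrec : ∀ t, u (t + 2) = x * u (t + 1) - u t) (p q : ℕ) :
    u p * u q = ∑ k ∈ range (min p q), u (((p : ℤ) - q).natAbs + 2 * k + 1) := by
  rcases le_total p q with hpq | hqp
  · obtain ⟨d, rfl⟩ := Nat.exists_eq_add_of_le hpq
    rw [mul_add_eq_sum_range h0 h1 hrec, min_eq_left hpq]
    congr! 4
    omega
  · obtain ⟨d, rfl⟩ := Nat.exists_eq_add_of_le hqp
    rw [mul_comm, mul_add_eq_sum_range h0 h1 hrec, min_eq_right hqp]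
    congr! 4
    omega

end ChebyshevLike

theorem connecting_operator_spectral_representation_general
    (Tm : ℕ) (r : ℕ → ℝ)
    (T : ℕ → ℝ → ℝ) (hT0 : ∀ x, T 0 x = 0) (hT1 : ∀ x, T 1 x = 1)
    (hrec : ∀ (t : ℕ) (x : ℝ), T (t + 2) x = x * T (t + 1) x - T t x)
    (ρ : Measure ℝ)
    (hint : ∀ k : ℕ, Integrable (T k) ρ)
    (hrint : ∀ k : ℕ, 1 ≤ k → r (k - 1) = ∫ x, T k x ∂ρ) :
    ∀ l m : ℕ, l < Tm → m < Tm →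
      (∑ k ∈ Finset.range (Tm - max (l + 1) (m + 1) + 1),
          r (((l : ℤ) - (m : ℤ)).natAbs + 2 * k)) =
        ∫ x, T (Tm - l) x * T (Tm - m) x ∂ρ := by
  intro l m hl hm
  have hprod : ∀ x, T (Tm - l) x * T (Tm - m) x =
      ∑ k ∈ range (Tm - max (l + 1) (m + 1) + 1),
        T (((l : ℤ) - m).natAbs + 2 * k + 1) x := by
    intro x
    have hmin : min (Tm - l) (Tm - m) = Tm - max (l + 1) (m + 1) + 1 := by omega
    have hdist : (((Tm - l : ℕ) : ℤ) - (Tm - m : ℕ)).natAbs = ((l : ℤ) - m).natAbs := by omega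
    rw [ChebyshevLike.mul_eq_sum_range_min (u := (T · x)) (hT0 x) (hT1 x) (hrec · x), hmin, hdist]
  rw [integral_congr_ae (ae_of_all _ hprod), integral_finsetSum _ fun k _ => hint _]
  refine sum_congr rfl fun k _ => ?_
  simpa using hrint _ le_add_self

/-- Spectral representation of the connecting operator of the discrete Schrödinger operator. -/
theorem connecting_operator_spectral_representation
    (Tm : ℕ) (hTm : 1 ≤ Tm) (r : ℕ → ℝ) (hr0 : r 0 = 1)
    (T : ℕ → ℝ → ℝ) (hT0 : ∀ x, T 0 x = 0) (hT1 : ∀ x, T 1 x = 1)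
    (hrec : ∀ (t : ℕ) (x : ℝ), T (t + 2) x = x * T (t + 1) x - T t x)
    (ρ : Measure ℝ) [IsFiniteMeasure ρ]
    (hint : ∀ k : ℕ, Integrable (T k) ρ)
    (hrint : ∀ k : ℕ, 1 ≤ k → r (k - 1) = ∫ x, T k x ∂ρ) :
    ∀ l m : ℕ, l < Tm → m < Tm →
      (∑ k ∈ Finset.range (Tm - max (l + 1) (m + 1) + 1),
          r (((l : ℤ) - (m : ℤ)).natAbs + 2 * k)) =
        ∫ x, T (Tm - l) x * T (Tm - m) x ∂ρ :=
  connecting_operator_spectral_representation_general Tm r T hT0 hT1 hrec ρ hint hrint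
end
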